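/- Let X, Y, and ε be random variables on a probability space taking values in finite sets, with ε independent of the pair (X, Y). Let g : E × 𝒴 → 𝒴 and set Y' = g(ε, Y). Assume the map (e, x, y) ↦ (x, g(e, y)) is one-to-one on the support of (ε, X, Y). Then the joint entropy satisfies H(X, Y') = H(X, Y) + H(ε). -/

import Mathlib

open MeasureTheory Real

/-- Shannon entropy (in nats) of a random variable `X` taking values in a finite set. -/
noncomputable def shannonEntropy {Ω : Type*} [MeasurableSpace Ω] {S : Type*} [Fintype S]
    (μ : Measure Ω) (X : Ω → S) : ℝ :=
  ∑ x : S, Real.negMulLog ((μ (X ⁻¹' {x})).toReal)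

/-- Conditional Shannon entropy `H(Y | X)` of a finitely-valued random variable `Y`
given a finitely-valued random variable `X`:
`H(Y|X) = ∑ₓ P(X = x) * ∑_y negMulLog (P(X = x, Y = y) / P(X = x))`
(with the conventions `0 * log 0 = 0` and `a / 0 = 0`). -/
noncomputable def condShannonEntropy {Ω : Type*} [MeasurableSpace Ω] {S T : Type*}
    [Fintype S] [Fintype T] (μ : Measure Ω) (Y : Ω → T) (X : Ω → S) : ℝ :=
  ∑ x : S, (μ (X ⁻¹' {x})).toReal *
    ∑ y : T, Real.negMulLog ((μ (X ⁻¹' {x} ∩ Y ⁻¹' {y})).toReal / (μ (X ⁻¹' {x})).toReal)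

/-!
`(X, Y')` is the image of `(ε, X, Y)` under `(e, x, y) ↦ (x, g e y)`, which is injective on the
support of `(ε, X, Y)`; so the two variables have the same atom masses up to relabelling (and
null atoms), hence the same entropy. By independence the atom masses of `(ε, (X, Y))` factor, and
`negMulLog (p * q) = q * negMulLog p + p * negMulLog q` splits its entropy as `H(ε) + H(X, Y)`.
-/

open Finset

lemma Real.negMulLog_sum_of_subsingleton {α : Type*} {s : Finset α} {f : α → ℝ}
    (h : {a | a ∈ s ∧ f a ≠ 0}.Subsingleton) :
    negMulLog (∑ a ∈ s, f a) = ∑ a ∈ s, negMulLog (f a) := by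
  by_cases hex : ∃ a ∈ s, f a ≠ 0
  · obtain ⟨a, ha, hfa⟩ := hex
    have hzero : ∀ b ∈ s, b ≠ a → f b = 0 := fun b hb hba =>
      by_contra fun hfb => hba (h ⟨hb, hfb⟩ ⟨ha, hfa⟩)
    rw [sum_eq_single_of_mem a ha hzero,
      sum_eq_single_of_mem a ha fun b hb hba => by rw [hzero b hb hba, negMulLog_zero]]
  · simp only [not_exists, not_and, not_not] at hex
    rw [sum_eq_zero hex, sum_eq_zero fun a ha => by rw [hex a ha, negMulLog_zero], negMulLog_zero]

section Entropy

variable {Ω A B : Type*} [MeasurableSpace Ω] {μ : Measure Ω} [Fintype A]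

lemma shannonEntropy_eq_sum_negMulLog_measureReal (X : Ω → A) :
    shannonEntropy μ X = ∑ a, negMulLog (μ.real (X ⁻¹' {a})) :=
  rfl

variable [MeasurableSpace A] [MeasurableSingletonClass A]

lemma sum_measureReal_preimage_singleton_eq_one [IsProbabilityMeasure μ] {X : Ω → A}
    (hX : Measurable X) : ∑ a, μ.real (X ⁻¹' {a}) = 1 := by
  rw [sum_measureReal_preimage_singleton _ fun a _ => hX (measurableSet_singleton a)]
  simp

lemma measureReal_comp_preimage_singleton [IsFiniteMeasure μ] [DecidableEq B] {F : Ω → A}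
    (hF : Measurable F) (f : A → B) (b : B) :
    μ.real ((f ∘ F) ⁻¹' {b}) = ∑ a with f a = b, μ.real (F ⁻¹' {a}) := by
  rw [sum_measureReal_preimage_singleton _ fun a _ => hF (measurableSet_singleton a)]
  congr 1
  ext ω
  simp

theorem shannonEntropy_comp_of_injOn [Fintype B] [IsFiniteMeasure μ] {F : Ω → A}
    (hF : Measurable F) {f : A → B} (hf : Set.InjOn f {a | μ (F ⁻¹' {a}) ≠ 0}) :
    shannonEntropy μ (f ∘ F) = shannonEntropy μ F := by
  classical
  calc shannonEntropy μ (f ∘ F)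
      = ∑ b, ∑ a with f a = b, negMulLog (μ.real (F ⁻¹' {a})) := by
        rw [shannonEntropy_eq_sum_negMulLog_measureReal]
        refine sum_congr rfl fun b _ => ?_
        rw [measureReal_comp_preimage_singleton hF, negMulLog_sum_of_subsingleton]
        rintro a ⟨ha, hpa⟩ a' ⟨ha', hpa'⟩
        rw [mem_filter] at ha ha'
        rw [measureReal_ne_zero_iff] at hpa hpa'
        exact hf hpa hpa' (ha.2.trans ha'.2.symm)
    _ = shannonEntropy μ F := sum_fiberwise _ _ _

theorem shannonEntropy_prodMk_of_indep [IsProbabilityMeasure μ]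
    [Fintype B] [MeasurableSpace B] [MeasurableSingletonClass B] {Z : Ω → A} {W : Ω → B}
    (hZ : Measurable Z) (hW : Measurable W)
    (hZW : ∀ a b, μ (Z ⁻¹' {a} ∩ W ⁻¹' {b}) = μ (Z ⁻¹' {a}) * μ (W ⁻¹' {b})) :
    shannonEntropy μ (fun ω => (Z ω, W ω)) = shannonEntropy μ Z + shannonEntropy μ W := by
  set pZ := fun a => μ.real (Z ⁻¹' {a})
  set pW := fun b => μ.real (W ⁻¹' {b})
  have hmass : ∀ p : A × B, μ.real ((fun ω => (Z ω, W ω)) ⁻¹' {p}) = pZ p.1 * pW p.2 := by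
    rintro ⟨a, b⟩
    rw [← Set.singleton_prod_singleton, Set.mk_preimage_prod, measureReal_def, hZW,
      ENNReal.toReal_mul]
    rfl
  calc shannonEntropy μ (fun ω => (Z ω, W ω))
      = ∑ a, ∑ b, (pW b * negMulLog (pZ a) + pZ a * negMulLog (pW b)) := by
        simp only [shannonEntropy_eq_sum_negMulLog_measureReal, hmass, negMulLog_mul,
          Fintype.sum_prod_type]
    _ = (∑ b, pW b) * ∑ a, negMulLog (pZ a) + (∑ a, pZ a) * ∑ b, negMulLog (pW b) := by
        simp only [sum_add_distrib, ← sum_mul, ← mul_sum]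
    _ = shannonEntropy μ Z + shannonEntropy μ W := by
        rw [sum_measureReal_preimage_singleton_eq_one hZ,
          sum_measureReal_preimage_singleton_eq_one hW, one_mul, one_mul]
        rfl

end Entropy

/-- Key intermediate claim in the proof of Theorem 1: under independence of `ε` from `(X, Y)`
and injectivity of `(e, x, y) ↦ (x, g(e, y))` on the support of `(ε, X, Y)`, the joint entropy
satisfies `H(X, Y') = H(X, Y) + H(ε)` where `Y' = g(ε, Y)`. -/
theorem jointEntropy_augment_eq_add_entropy
    {Ω E S T : Type*} [MeasurableSpace Ω]
    [Fintype E] [Fintype S] [Fintype T]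
    [MeasurableSpace E] [MeasurableSingletonClass E]
    [MeasurableSpace S] [MeasurableSingletonClass S]
    [MeasurableSpace T] [MeasurableSingletonClass T]
    (μ : Measure Ω) [IsProbabilityMeasure μ]
    (X : Ω → S) (Y : Ω → T) (ε : Ω → E)
    (hX : Measurable X) (hY : Measurable Y) (hε : Measurable ε)
    (g : E → T → T)
    (hInd : ∀ (e : E) (x : S) (y : T),
      μ {ω | ε ω = e ∧ X ω = x ∧ Y ω = y}
        = μ {ω | ε ω = e} * μ {ω | X ω = x ∧ Y ω = y})
    (hInj : Set.InjOn (fun p : E × S × T => (p.2.1, g p.1 p.2.2))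
      {p : E × S × T | μ {ω | ε ω = p.1 ∧ X ω = p.2.1 ∧ Y ω = p.2.2} ≠ 0}) :
    shannonEntropy μ (fun ω => (X ω, g (ε ω) (Y ω)))
      = shannonEntropy μ (fun ω => (X ω, Y ω)) + shannonEntropy μ ε := by
  have hXY : Measurable fun ω => (X ω, Y ω) := hX.prodMk hY
  have hfiber : ∀ p : E × S × T, (fun ω => (ε ω, X ω, Y ω)) ⁻¹' {p}
      = {ω | ε ω = p.1 ∧ X ω = p.2.1 ∧ Y ω = p.2.2} := by
    intro p
    ext ω
    simp [Prod.ext_iff]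
  have hIndep : ∀ e (q : S × T), μ (ε ⁻¹' {e} ∩ (fun ω => (X ω, Y ω)) ⁻¹' {q})
      = μ (ε ⁻¹' {e}) * μ ((fun ω => (X ω, Y ω)) ⁻¹' {q}) := by
    intro e q
    have hpair : (fun ω => (X ω, Y ω)) ⁻¹' {q} = {ω | X ω = q.1 ∧ Y ω = q.2} := by
      ext ω
      simp [Prod.ext_iff]
    rw [hpair]
    exact hInd e q.1 q.2
  calc shannonEntropy μ (fun ω => (X ω, g (ε ω) (Y ω)))
      = shannonEntropy μ (fun ω => (ε ω, X ω, Y ω)) :=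
        shannonEntropy_comp_of_injOn (f := fun p : E × S × T => (p.2.1, g p.1 p.2.2))
          (hε.prodMk hXY) (by simpa only [hfiber] using hInj)
    _ = shannonEntropy μ ε + shannonEntropy μ (fun ω => (X ω, Y ω)) :=
        shannonEntropy_prodMk_of_indep hε hXY hIndep
    _ = _ := add_comm _ _
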